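/- Let E = ℝ^d with the Euclidean inner product, let g : E → ℝ be differentiable with L-Lipschitz gradient ∇g (L > 0), let f : E → ℝ, let F : E × E → ℝ be a tangent majorant of f, let 0 < τ < 1/L, set h = f + g, and assume h(x) ≥ h* for all x ∈ E for some h* ∈ ℝ. Let (x^(n)) be a sequence in E such that for every n, x^(n+1) is a global minimizer of z ↦ F(z, x^(n)) + g(x^(n)) + ⟨z − x^(n), ∇g(x^(n))⟩ + (1/(2τ))‖z − x^(n)‖². Define γ_N = min over 0 ≤ n ≤ N−1 of ‖x^(n+1) − x^(n)‖². Then for every N ≥ 1, γ_N ≤ (1/N) · (h(x^(0)) − h*) / (1/(2τ) − L/2); in particular γ_N tends to 0 as N → ∞ at rate O(1/N). -/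

import Mathlib

/-!
Comparing the minimizer `x (n+1)` of the surrogate with the candidate `z = x n`, and bounding
`g (x (n+1))` from above by the descent lemma, gives the sufficient decrease
`(1/(2τ) - L/2) ‖x (n+1) - x n‖² ≤ h (x n) - h (x (n+1))`. Telescoping and `h ≥ h*` bound the sum
of the first `N` squared residuals by `h (x 0) - h*`, and their minimum is at most their mean.
-/

open scoped RealInnerProductSpace

open Finset

section InnerProductSpace

variable {E : Type*} [NormedAddCommGroup E] [InnerProductSpace ℝ E] [CompleteSpace E]

theorem HasGradientAt.hasDerivAt_comp_add_smul {g : E → ℝ} {g' x u : E} {t : ℝ}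
    (h : HasGradientAt g g' (x + t • u)) :
    HasDerivAt (fun s : ℝ => g (x + s • u)) ⟪g', u⟫ t := by
  have hline : HasDerivAt (fun s : ℝ => x + s • u) u t := by
    simpa using ((hasDerivAt_id t).smul_const u).const_add x
  simpa [Function.comp_def] using
    (hasGradientAt_iff_hasFDerivAt.mp h).comp_hasDerivAt t hline

theorem le_add_inner_gradient_add_sq_of_lipschitz_gradient {g : E → ℝ} {L : ℝ} (hg : Differentiable ℝ g)
    (hlip : ∀ a b : E, ‖gradient g a - gradient g b‖ ≤ L * ‖a - b‖) (x y : E) :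
    g y ≤ g x + ⟪gradient g x, y - x⟫ + L / 2 * ‖y - x‖ ^ 2 := by
  set u := y - x
  have hderiv (t : ℝ) :
      HasDerivAt (fun s : ℝ => g (x + s • u)) ⟪gradient g (x + t • u), u⟫ t :=
    (hg _).hasGradientAt.hasDerivAt_comp_add_smul
  have hbound (t : ℝ) :
      HasDerivAt (fun s : ℝ => g x + s * ⟪gradient g x, u⟫ + L / 2 * s ^ 2 * ‖u‖ ^ 2)
        (⟪gradient g x, u⟫ + L * t * ‖u‖ ^ 2) t := by
    refine ((((hasDerivAt_id' t).mul_const ⟪gradient g x, u⟫).const_add (g x)).add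
      (((hasDerivAt_pow 2 t).const_mul (L / 2)).mul_const (‖u‖ ^ 2))).congr_deriv ?_
    ring
  have hslope (t : ℝ) (ht : t ∈ Set.Ico (0 : ℝ) 1) :
      ⟪gradient g (x + t • u), u⟫ ≤ ⟪gradient g x, u⟫ + L * t * ‖u‖ ^ 2 := by
    have := calc ⟪gradient g (x + t • u) - gradient g x, u⟫
        ≤ ‖gradient g (x + t • u) - gradient g x‖ * ‖u‖ := real_inner_le_norm _ _
      _ ≤ L * ‖(x + t • u) - x‖ * ‖u‖ := by gcongr; exact hlip _ _
      _ = L * t * ‖u‖ ^ 2 := by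
          rw [add_sub_cancel_left, norm_smul, Real.norm_of_nonneg ht.1]; ring
    rw [inner_sub_left] at this
    linarith
  have hle := image_le_of_deriv_right_le_deriv_boundary
    (fun t _ => (hderiv t).continuousAt.continuousWithinAt)
    (fun t _ => (hderiv t).hasDerivWithinAt) (by simp)
    (fun t _ => (hbound t).continuousAt.continuousWithinAt)
    (fun t _ => (hbound t).hasDerivWithinAt) hslope (Set.right_mem_Icc.mpr zero_le_one)
  simpa [u] using hle

def IsTangentMajorant (F : E × E → ℝ) (f : E → ℝ) : Prop :=
  (∀ x xt, f x ≤ F (x, xt)) ∧ ∀ x, F (x, x) = f x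

/-- The function minimised by one step of the majorized forward–backward method from `xt`. -/
noncomputable def fbSurrogate (F : E × E → ℝ) (g : E → ℝ) (τ : ℝ) (xt z : E) : ℝ :=
  F (z, xt) + g xt + ⟪z - xt, gradient g xt⟫ + 1 / (2 * τ) * ‖z - xt‖ ^ 2

theorem IsTangentMajorant.sufficient_decrease {F : E × E → ℝ} {f g : E → ℝ} {L τ : ℝ}
    (hF : IsTangentMajorant F f) (hg : Differentiable ℝ g)
    (hlip : ∀ a b : E, ‖gradient g a - gradient g b‖ ≤ L * ‖a - b‖) {xt x' : E}
    (hmin : IsMinOn (fbSurrogate F g τ xt) Set.univ x') :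
    (1 / (2 * τ) - L / 2) * ‖x' - xt‖ ^ 2 ≤ (f xt + g xt) - (f x' + g x') := by
  have hstep := isMinOn_univ_iff.mp hmin xt
  simp only [fbSurrogate, sub_self, inner_zero_left, norm_zero, hF.2] at hstep
  have hdescent := le_add_inner_gradient_add_sq_of_lipschitz_gradient hg hlip xt x'
  rw [real_inner_comm] at hstep
  linarith [hF.1 x' xt]

end InnerProductSpace

theorem inf'_range_le_of_sufficient_decrease {r φ : ℕ → ℝ} {c m : ℝ} (hc : 0 < c)
    (hdec : ∀ n, c * r n ≤ φ n - φ (n + 1)) (hm : ∀ n, m ≤ φ n) {N : ℕ}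
    (hN : (range N).Nonempty) :
    (range N).inf' hN r ≤ 1 / N * ((φ 0 - m) / c) := by
  have hsum : c * ∑ n ∈ range N, r n ≤ φ 0 - φ N := by
    rw [mul_sum, ← sum_range_sub']
    exact sum_le_sum fun n _ => hdec n
  have hmin : N * (range N).inf' hN r ≤ ∑ n ∈ range N, r n := by
    simpa using card_nsmul_le_sum (range N) r _ fun n hn => inf'_le r hn
  have hNpos : (0 : ℝ) < N := Nat.cast_pos.mpr (Nat.pos_of_ne_zero (nonempty_range_iff.mp hN))
  rw [one_div_mul_eq_div, le_div_iff₀ hNpos, le_div_iff₀ hc]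
  nlinarith [hm N]

/-- Rate of convergence of the minimal squared residual: with
`γ_N = min_{0 ≤ n ≤ N-1} ‖x (n+1) - x n‖²`, one has
`γ_N ≤ (1/N) (h (x 0) - h*) / (1/(2τ) - L/2)`, and in particular `γ_N → 0`. -/
theorem majorized_fb_residual_rate {d : ℕ}
    (g f : EuclideanSpace ℝ (Fin d) → ℝ)
    (F : EuclideanSpace ℝ (Fin d) × EuclideanSpace ℝ (Fin d) → ℝ)
    (L τ : ℝ)
    (hg : Differentiable ℝ g)
    (hlip : ∀ a b : EuclideanSpace ℝ (Fin d),
      ‖gradient g a - gradient g b‖ ≤ L * ‖a - b‖)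
    (hmaj : ∀ x xt : EuclideanSpace ℝ (Fin d), f x ≤ F (x, xt))
    (hdiag : ∀ x : EuclideanSpace ℝ (Fin d), F (x, x) = f x)
    (hτ0 : 0 < τ) (hτ : τ < 1 / L)
    (hstar : ℝ) (hbound : ∀ z : EuclideanSpace ℝ (Fin d), hstar ≤ f z + g z)
    (x : ℕ → EuclideanSpace ℝ (Fin d))
    (hiter : ∀ n : ℕ, ∀ z : EuclideanSpace ℝ (Fin d),
      F (x (n + 1), x n) + g (x n) + ⟪x (n + 1) - x n, gradient g (x n)⟫ +
          (1 / (2 * τ)) * ‖x (n + 1) - x n‖ ^ 2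
        ≤ F (z, x n) + g (x n) + ⟪z - x n, gradient g (x n)⟫ +
          (1 / (2 * τ)) * ‖z - x n‖ ^ 2) :
    (∀ N : ℕ, ∀ hN : 1 ≤ N,
      (Finset.range N).inf' (Finset.nonempty_range_iff.mpr (by omega))
          (fun n => ‖x (n + 1) - x n‖ ^ 2)
        ≤ (1 / (N : ℝ)) * ((f (x 0) + g (x 0) - hstar) / (1 / (2 * τ) - L / 2))) ∧
    Filter.Tendsto
      (fun N : ℕ =>
        (Finset.range (N + 1)).inf' (Finset.nonempty_range_iff.mpr (Nat.succ_ne_zero N))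
          (fun n => ‖x (n + 1) - x n‖ ^ 2))
      Filter.atTop (nhds 0) := by
  have hL : 0 < L := one_div_pos.mp (hτ0.trans hτ)
  have hc : 0 < 1 / (2 * τ) - L / 2 := by
    have : τ * L < 1 := (lt_div_iff₀ hL).mp (by simpa using hτ)
    rw [sub_pos, lt_div_iff₀ (by positivity)]
    linarith
  have hdec (n : ℕ) := IsTangentMajorant.sufficient_decrease ⟨hmaj, hdiag⟩ hg hlip
    (isMinOn_univ_iff.mpr (hiter n))
  have hrate (N : ℕ) (hN : (range N).Nonempty) :=
    inf'_range_le_of_sufficient_decrease hc hdec (fun n => hbound (x n)) hN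
  refine ⟨fun N _ => hrate N _, ?_⟩
  refine squeeze_zero (fun N => le_inf' _ _ fun n _ => by positivity)
    (fun N => (hrate (N + 1) _).trans_eq (by push_cast; rfl)) ?_
  simpa using tendsto_one_div_add_atTop_nhds_zero_nat.mul_const
    ((f (x 0) + g (x 0) - hstar) / (1 / (2 * τ) - L / 2))
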